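/- arXiv:2602.19733 — 3 statements merged into one kernel-verified Lean document; each statement's English description precedes it below -/
import Mathlib

section
/- Let D* = (Id − A)⁻¹ B where ‖A‖ ≤ ρ < 1 and ‖B‖ ≤ κ. Let (Aₖ), (Bₖ) be operator sequences with ‖Aₖ‖ ≤ ρ, ‖Aₖ − A‖ ≤ M_x·eₖ, ‖Bₖ − B‖ ≤ M_u·eₖ, where e_{k+1} ≤ ρ·eₖ. Define D_{k+1} := Aₖ·Dₖ + Bₖ. Then for all k ≥ 1, ‖Dₖ − D*‖ ≤ ρᵏ·‖D₀ − D*‖ + k·ρ^{k-1}·Γ·e₀, where Γ := M_x·κ/(1 − ρ) + M_u. -/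
/-!
The error `Dₖ - D*` obeys the perturbed contraction `‖Dₖ₊₁ - D*‖ ≤ ρ ‖Dₖ - D*‖ + Γ eₖ`: write
`Dₖ₊₁ - D* = Aₖ (Dₖ - D*) + (Aₖ - A) D* + (Bₖ - B)` using the fixed-point equation `D* = A D* + B`,
and bound `‖D*‖ ≤ κ / (1 - ρ)` by the same equation. Since `eₖ ≤ ρᵏ e₀`, unrolling the recursion
adds `k` forcing terms each of size `ρᵏ⁻¹ Γ e₀`.
-/

/-- For `k = 0` the forcing term vanishes because of the factor `k`, whatever `ρ ^ (0 - 1)` is. -/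
theorem le_pow_mul_add_nat_mul_pow_pred_mul {a : ℕ → ℝ} {ρ c : ℝ} (hρ : 0 ≤ ρ)
    (h : ∀ k, a (k + 1) ≤ ρ * a k + ρ ^ k * c) (k : ℕ) :
    a k ≤ ρ ^ k * a 0 + k * ρ ^ (k - 1) * c := by
  induction k with
  | zero => simp
  | succ k ih =>
    have hpow : (k : ℝ) * (ρ * ρ ^ (k - 1)) = k * ρ ^ k := by
      rcases k with _ | k
      · simp
      · rw [Nat.add_sub_cancel, ← pow_succ']
    calc a (k + 1) ≤ ρ * (ρ ^ k * a 0 + k * ρ ^ (k - 1) * c) + ρ ^ k * c :=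
          (h k).trans (by gcongr)
      _ = ρ ^ (k + 1) * a 0 + (k * (ρ * ρ ^ (k - 1)) + ρ ^ k) * c := by ring
      _ = ρ ^ (k + 1) * a 0 + ((k + 1 : ℕ) : ℝ) * ρ ^ (k + 1 - 1) * c := by
        rw [hpow, Nat.add_sub_cancel]; push_cast; ring

namespace ContinuousLinearMap

variable {𝕜 X U : Type*} [NontriviallyNormedField 𝕜]
  [NormedAddCommGroup X] [NormedSpace 𝕜 X] [NormedAddCommGroup U] [NormedSpace 𝕜 U]

theorem inverse_one_sub_comp_eq {A : X →L[𝕜] X} (hA : IsUnit (1 - A)) (B : U →L[𝕜] X) :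
    (Ring.inverse (1 - A)).comp B = A.comp ((Ring.inverse (1 - A)).comp B) + B := by
  set S := Ring.inverse (1 - A)
  have hinv : (1 - A).comp S = 1 := Ring.mul_inverse_cancel _ hA
  have h : (1 - A).comp (S.comp B) = B := by
    rw [← comp_assoc, hinv, one_def, id_comp]
  rw [sub_comp, one_def, id_comp] at h
  rw [← sub_eq_iff_eq_add', h]

theorem norm_le_div_one_sub_of_eq_comp_add {A : X →L[𝕜] X} {B D : U →L[𝕜] X} {ρ κ : ℝ}
    (hD : D = A.comp D + B) (hA : ‖A‖ ≤ ρ) (hρ : ρ < 1) (hB : ‖B‖ ≤ κ) :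
    ‖D‖ ≤ κ / (1 - ρ) := by
  have : ‖D‖ ≤ ρ * ‖D‖ + κ :=
    calc ‖D‖ ≤ ‖A.comp D‖ + ‖B‖ := by nth_rewrite 1 [hD]; exact norm_add_le _ _
      _ ≤ ‖A‖ * ‖D‖ + ‖B‖ := by gcongr; exact opNorm_comp_le _ _
      _ ≤ ρ * ‖D‖ + κ := by gcongr
  rw [le_div_iff₀ (by linarith)]
  linarith

theorem norm_comp_add_sub_le {A A' : X →L[𝕜] X} {B B' D Dstar : U →L[𝕜] X}
    (hDstar : Dstar = A.comp Dstar + B) :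
    ‖A'.comp D + B' - Dstar‖ ≤ ‖A'‖ * ‖D - Dstar‖ + ‖A' - A‖ * ‖Dstar‖ + ‖B' - B‖ := by
  have hsplit :
      A'.comp D + B' - Dstar = A'.comp (D - Dstar) + (A' - A).comp Dstar + (B' - B) := by
    conv_lhs => rw [hDstar]
    rw [comp_sub, sub_comp]
    abel
  rw [hsplit]
  refine (norm_add₃_le ..).trans (add_le_add_three ?_ ?_ le_rfl) <;> exact opNorm_comp_le _ _

end ContinuousLinearMap

open ContinuousLinearMap in
theorem stmt_6 {X U : Type*}
    [NormedAddCommGroup X] [NormedSpace ℝ X] [CompleteSpace X]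
    [NormedAddCommGroup U] [NormedSpace ℝ U]
    (A : X →L[ℝ] X) (B : U →L[ℝ] X) (ρ κ Mx Mu : ℝ)
    (hρ0 : 0 ≤ ρ) (hρ1 : ρ < 1) (hA : ‖A‖ ≤ ρ) (hB : ‖B‖ ≤ κ)
    (hMx : 0 ≤ Mx) (hMu : 0 ≤ Mu)
    (e : ℕ → ℝ) (he : ∀ k, 0 ≤ e k) (hrece : ∀ k, e (k + 1) ≤ ρ * e k)
    (Ak : ℕ → X →L[ℝ] X) (Bk : ℕ → U →L[ℝ] X)
    (hAk : ∀ k, ‖Ak k‖ ≤ ρ)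
    (hAkA : ∀ k, ‖Ak k - A‖ ≤ Mx * e k)
    (hBkB : ∀ k, ‖Bk k - B‖ ≤ Mu * e k)
    (D : ℕ → U →L[ℝ] X)
    (hD : ∀ k, D (k + 1) = (Ak k).comp (D k) + Bk k) :
    ∀ k, 1 ≤ k →
      ‖D k - (Ring.inverse (1 - A)).comp B‖ ≤
        ρ ^ k * ‖D 0 - (Ring.inverse (1 - A)).comp B‖ +
          (k : ℝ) * ρ ^ (k - 1) * (Mx * κ / (1 - ρ) + Mu) * e 0 := by
  intro k _
  set Dstar := (Ring.inverse (1 - A)).comp B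
  set Γ := Mx * κ / (1 - ρ) + Mu
  have hΓ : 0 ≤ Γ := by
    have : 0 < 1 - ρ := by linarith
    have := (norm_nonneg B).trans hB
    positivity
  have hfix : Dstar = A.comp Dstar + B :=
    inverse_one_sub_comp_eq (Units.oneSub A (hA.trans_lt hρ1)).isUnit B
  have hDstar : ‖Dstar‖ ≤ κ / (1 - ρ) := norm_le_div_one_sub_of_eq_comp_add hfix hA hρ1 hB
  have hstep : ∀ j, ‖D (j + 1) - Dstar‖ ≤ ρ * ‖D j - Dstar‖ + ρ ^ j * (Γ * e 0) := fun j => by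
    have hej : e j ≤ ρ ^ j * e 0 := le_geom hρ0 j fun i _ => hrece i
    calc ‖D (j + 1) - Dstar‖
        ≤ ‖Ak j‖ * ‖D j - Dstar‖ + ‖Ak j - A‖ * ‖Dstar‖ + ‖Bk j - B‖ := by
          rw [hD]; exact norm_comp_add_sub_le hfix
      _ ≤ ρ * ‖D j - Dstar‖ + Mx * e j * (κ / (1 - ρ)) + Mu * e j := by
          gcongr
          exacts [hAk j, mul_nonneg hMx (he j), hAkA j, hBkB j]
      _ = ρ * ‖D j - Dstar‖ + Γ * e j := by ring
      _ ≤ ρ * ‖D j - Dstar‖ + ρ ^ j * (Γ * e 0) := by rw [mul_left_comm]; gcongr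
  simpa only [mul_assoc] using
    le_pow_mul_add_nat_mul_pow_pred_mul (a := fun j => ‖D j - Dstar‖) hρ0 hstep k
end

section
/- Let ρ ∈ (0,1), K ∈ ℕ, ω > 0, and constants d₀ ≥ 0, C ≥ 0. Define h : [0,K] → ℝ by h(T) = ρ^{K−T}·d₀ + (K − T)·ρ^{K+ωT−1}·C. Then h is convex on [0,K]. -/
/-!
Both summands are convex. `ρ ^ (K - T)` is the exponential of an affine function of `T`.
`(K - T) * ρ ^ (K + ω T - 1)` is a product of two nonnegative convex functions on `T ≤ K`, both
decreasing in `T` because `ρ ≤ 1` and `ω ≥ 0`. A product of nonnegative convex functions that vary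
in the same direction is convex (Chebyshev's sum inequality).
-/

open Set Real

lemma convexOn_rpow_affine {ρ : ℝ} (hρ : 0 < ρ) (a b : ℝ) :
    ConvexOn ℝ univ fun T : ℝ => ρ ^ (a + b * T) := by
  have h := ((convexOn_rpow_left hρ).comp_linearMap (LinearMap.mul ℝ ℝ b)).smul
    (rpow_nonneg hρ.le a)
  refine h.congr fun T _ => ?_
  simp [rpow_add hρ]

lemma antitone_rpow_affine {ρ : ℝ} (hρ₀ : 0 < ρ) (hρ₁ : ρ ≤ 1) (a : ℝ) {b : ℝ} (hb : 0 ≤ b) :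
    Antitone fun T : ℝ => ρ ^ (a + b * T) := fun _ _ hST =>
  rpow_le_rpow_of_exponent_ge hρ₀ hρ₁ (by gcongr)

lemma convexOn_sub_mul_rpow_affine {ρ : ℝ} (hρ₀ : 0 < ρ) (hρ₁ : ρ ≤ 1) (K a : ℝ) {b : ℝ}
    (hb : 0 ≤ b) : ConvexOn ℝ (Iic K) fun T : ℝ => (K - T) * ρ ^ (a + b * T) :=
  ((convexOn_const K (convex_Iic K)).sub (concaveOn_id (convex_Iic K))).mul
    ((convexOn_rpow_affine hρ₀ a b).subset (subset_univ _) (convex_Iic K))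
    (fun _ hT => sub_nonneg.2 hT) (fun _ _ => rpow_nonneg hρ₀.le _)
    ((Antitone.monovary (f := fun T : ℝ => K - T) antitone_const_tsub
      (antitone_rpow_affine hρ₀ hρ₁ a hb)).monovaryOn _)

theorem stmt_9_general (ρ : ℝ) (h0 : 0 < ρ) (h1 : ρ < 1)
    (K : ℝ) (ω : ℝ) (hω : 0 < ω)
    (d0 C : ℝ) (hd0 : 0 ≤ d0) (hC : 0 ≤ C) :
    ConvexOn ℝ (Set.Icc 0 K)
      (fun T : ℝ => ρ ^ (K - T) * d0 + (K - T) * ρ ^ (K + ω * T - 1) * C) := by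
  have hdecay : ConvexOn ℝ (Icc 0 K) fun T : ℝ => ρ ^ (K - T) * d0 :=
    (((convexOn_rpow_affine h0 K (-1)).smul hd0).subset (subset_univ _) (convex_Icc 0 K)).congr
      fun T _ => by simp [sub_eq_add_neg, mul_comm]
  have hbias : ConvexOn ℝ (Icc 0 K) fun T : ℝ => (K - T) * ρ ^ (K + ω * T - 1) * C :=
    (((convexOn_sub_mul_rpow_affine h0 h1.le K (K - 1) hω.le).smul hC).subset Icc_subset_Iic_self
      (convex_Icc 0 K)).congr fun T _ => by simp only [smul_eq_mul]; ring_nf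
  exact hdecay.add hbias

theorem stmt_9 (ρ : ℝ) (h0 : 0 < ρ) (h1 : ρ < 1)
    (K : ℝ) (hK : 0 ≤ K) (ω : ℝ) (hω : 0 < ω)
    (d0 C : ℝ) (hd0 : 0 ≤ d0) (hC : 0 ≤ C) :
    ConvexOn ℝ (Set.Icc 0 K)
      (fun T : ℝ => ρ ^ (K - T) * d0 + (K - T) * ρ ^ (K + ω * T - 1) * C) :=
  stmt_9_general ρ h0 h1 K ω hω d0 C hd0 hC
end

section
/- (Heavy-ball spectral condition) Consider the heavy-ball iteration matrix on X × X given in block form by M = [[(1+β)I − αH, −βI],[I, 0]] where H is symmetric with eigenvalues in [m,L], 0 < m ≤ L, β ∈ [0,1), and α > 0 with α·L < 2(1+β). Then every eigenvalue λ of M satisfies |λ| < 1, i.e., the spectral radius of M is strictly less than 1, even though the operator norm of M may exceed 1. -/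
/-!
An eigenvector `(u, v)` of the heavy-ball matrix for the eigenvalue `λ` has `u = λ v` and
`λ ((1 + β) v - α H v) - β v = λ² v`. Pairing with `v̄` and writing `ρ ∈ [m, L]` for the Rayleigh
quotient of the real symmetric `H` at `v` turns this into the scalar equation
`λ² - (1 + β - α ρ) λ + β = 0`. The hypotheses on `α` give `|1 + β - α ρ| < 1 + β`, and with
`β < 1` this is the Schur–Cohn condition placing both roots of the quadratic in the open unit disc.
-/

open Matrix
open scoped ComplexOrder

theorem Complex.norm_lt_one_of_sq_sub_mul_add_eq_zero {β c : ℝ} (hβ : β < 1) (hc : |c| < 1 + β)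
    {z : ℂ} (hz : z ^ 2 - c * z + β = 0) : ‖z‖ < 1 := by
  have hre : z.re ^ 2 - z.im ^ 2 - c * z.re + β = 0 := by
    simpa [sq] using congrArg Complex.re hz
  have him : z.im * (2 * z.re - c) = 0 := by
    have := congrArg Complex.im hz
    simp only [sq, Complex.sub_im, Complex.add_im, Complex.mul_im, Complex.ofReal_re,
      Complex.ofReal_im, Complex.zero_im] at this
    linarith
  rw [← sq_lt_one_iff₀ (norm_nonneg z), Complex.sq_norm, Complex.normSq_apply]
  obtain ⟨hc₁, hc₂⟩ := abs_lt.mp hc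
  rcases mul_eq_zero.mp him with hy | hx
  · -- a real root `x` with `|x| ≥ 1` would give `(x - 1) (x - β) < 0`, or its mirror image
    rw [hy, mul_zero, add_zero, ← sq]
    rw [hy] at hre
    by_contra! h
    rcases le_abs'.mp (one_le_sq_iff_one_le_abs _ |>.mp h) with hx | hx
    · nlinarith [mul_lt_mul_of_pos_right hc₁ (by linarith : (0 : ℝ) < -z.re)]
    · nlinarith [mul_lt_mul_of_pos_right hc₂ (by linarith : (0 : ℝ) < z.re)]
  · -- a non-real root has conjugate partner, so `|z|² = β`
    obtain rfl : c = 2 * z.re := by linarith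
    nlinarith

theorem Matrix.exists_ne_zero_smul_mulVec_add_mulVec_eq_of_mem_spectrum_fromBlocks
    {K n : Type*} [Field K] [Fintype n] [DecidableEq n] {A B : Matrix n n K} {μ : K}
    (hμ : μ ∈ spectrum K (fromBlocks A B (1 : Matrix n n K) 0)) :
    ∃ v ≠ 0, μ • (A *ᵥ v) + B *ᵥ v = μ ^ 2 • v := by
  rw [← spectrum_toLin', ← Module.End.hasEigenvalue_iff_mem_spectrum] at hμ
  obtain ⟨w, hw, hw0⟩ := hμ.exists_hasEigenvector
  rw [Module.End.mem_eigenspace_iff, toLin'_apply, fromBlocks_mulVec] at hw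
  have hinl : A *ᵥ (w ∘ Sum.inl) + B *ᵥ (w ∘ Sum.inr) = μ • (w ∘ Sum.inl) :=
    funext fun i => by simpa using congrFun hw (Sum.inl i)
  have hinr : w ∘ Sum.inl = μ • (w ∘ Sum.inr) :=
    funext fun i => by simpa using congrFun hw (Sum.inr i)
  refine ⟨w ∘ Sum.inr, fun h0 => hw0 ?_, ?_⟩
  · rw [← Sum.elim_comp_inl_inr w, hinr, h0, smul_zero, Sum.elim_zero_zero]
  · rw [← mulVec_smul, ← hinr, hinl, hinr, smul_smul, sq]

theorem Matrix.IsSymm.star_dotProduct_map_ofReal_mulVec {n : Type*} [Fintype n]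
    {H : Matrix n n ℝ} (hH : H.IsSymm) (v : n → ℂ) :
    star v ⬝ᵥ (H.map (↑) *ᵥ v) =
      ↑((Complex.re ∘ v) ⬝ᵥ H *ᵥ (Complex.re ∘ v) + (Complex.im ∘ v) ⬝ᵥ H *ᵥ (Complex.im ∘ v)) := by
  apply Complex.ext
  · simp [dotProduct, mulVec, Complex.mul_re, Finset.mul_sum, mul_left_comm, mul_add,
      Finset.sum_add_distrib]
  · have hHc : (H.map ((↑) : ℝ → ℂ)).IsHermitian :=
      (isHermitian_iff_isSymm.mpr hH).map _ fun x => (Complex.conj_ofReal x).symm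
    simpa using hHc.im_star_dotProduct_mulVec_self v

theorem Matrix.IsSymm.exists_mem_Icc_star_dotProduct_map_ofReal_mulVec_eq {n : Type*}
    [Fintype n] [DecidableEq n] {H : Matrix n n ℝ} (hH : H.IsSymm) {m L : ℝ}
    (hHf : ∀ f : n → ℝ, m * (f ⬝ᵥ f) ≤ f ⬝ᵥ H *ᵥ f ∧ f ⬝ᵥ H *ᵥ f ≤ L * (f ⬝ᵥ f))
    {v : n → ℂ} (hv : v ≠ 0) :
    ∃ ρ ∈ Set.Icc m L, star v ⬝ᵥ (H.map (↑) *ᵥ v) = ρ * (star v ⬝ᵥ v) := by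
  set a := Complex.re ∘ v
  set b := Complex.im ∘ v
  have hs : star v ⬝ᵥ v = ↑(a ⬝ᵥ a + b ⬝ᵥ b) := by
    simpa using isSymm_one.star_dotProduct_map_ofReal_mulVec v
  have hs_pos : 0 < a ⬝ᵥ a + b ⬝ᵥ b := by
    rw [← Complex.zero_lt_real, ← hs]
    exact (dotProduct_star_self_nonneg v).lt_of_ne' (dotProduct_star_self_eq_zero.not.mpr hv)
  obtain ⟨ha₁, ha₂⟩ := hHf a
  obtain ⟨hb₁, hb₂⟩ := hHf b
  refine ⟨(a ⬝ᵥ H *ᵥ a + b ⬝ᵥ H *ᵥ b) / (a ⬝ᵥ a + b ⬝ᵥ b), ⟨?_, ?_⟩, ?_⟩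
  · rw [le_div_iff₀ hs_pos]; linarith
  · rw [div_le_iff₀ hs_pos]; linarith
  · rw [hH.star_dotProduct_map_ofReal_mulVec, hs, ← Complex.ofReal_mul,
      div_mul_cancel₀ _ hs_pos.ne']

def heavyBallMatrix {n : Type*} [DecidableEq n] (H : Matrix n n ℝ) (α β : ℝ) :
    Matrix (n ⊕ n) (n ⊕ n) ℝ :=
  fromBlocks ((1 + β) • 1 - α • H) (-(β • 1)) 1 0

theorem heavyBallMatrix_map_algebraMap {n : Type*} [DecidableEq n] (H : Matrix n n ℝ) (α β : ℝ) :
    (heavyBallMatrix H α β).map (algebraMap ℝ ℂ) =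
      fromBlocks ((1 + β : ℂ) • 1 - (α : ℂ) • H.map (↑)) (-((β : ℂ) • 1)) 1 0 := by
  ext (i | i) (j | j) <;> by_cases h : i = j <;> simp [heavyBallMatrix, one_apply, h]

theorem norm_lt_one_of_mem_spectrum_heavyBallMatrix {n : Type*} [Fintype n] [DecidableEq n]
    {H : Matrix n n ℝ} (hH : H.IsSymm) {m L : ℝ} (hm : 0 < m)
    (hHf : ∀ f : n → ℝ, m * (f ⬝ᵥ f) ≤ f ⬝ᵥ H *ᵥ f ∧ f ⬝ᵥ H *ᵥ f ≤ L * (f ⬝ᵥ f))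
    {α β : ℝ} (hβ : β < 1) (hα : 0 < α) (hαL : α * L < 2 * (1 + β)) {lam : ℂ}
    (hlam : lam ∈ spectrum ℂ ((heavyBallMatrix H α β).map (algebraMap ℝ ℂ))) : ‖lam‖ < 1 := by
  rw [heavyBallMatrix_map_algebraMap] at hlam
  obtain ⟨v, hv0, hv⟩ := exists_ne_zero_smul_mulVec_add_mulVec_eq_of_mem_spectrum_fromBlocks hlam
  obtain ⟨ρ, ⟨hmρ, hρL⟩, hρ⟩ := hH.exists_mem_Icc_star_dotProduct_map_ofReal_mulVec_eq hHf hv0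
  have hs : star v ⬝ᵥ v ≠ 0 := dotProduct_star_self_eq_zero.not.mpr hv0
  refine Complex.norm_lt_one_of_sq_sub_mul_add_eq_zero (c := 1 + β - α * ρ) hβ ?_ ?_
  · have : α * ρ ≤ α * L := mul_le_mul_of_nonneg_left hρL hα.le
    rw [abs_lt]; constructor <;> nlinarith
  · have hpair := congrArg (star v ⬝ᵥ ·) hv
    simp only [sub_mulVec, neg_mulVec, smul_mulVec, one_mulVec, dotProduct_add, dotProduct_sub,
      dotProduct_neg, dotProduct_smul, hρ, smul_eq_mul] at hpair
    apply mul_left_cancel₀ hs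
    push_cast
    linear_combination -hpair

theorem stmt_16_general {N : ℕ} (H : Matrix (Fin N) (Fin N) ℝ)
    (hsymm : H.IsSymm) (m L : ℝ) (hm : 0 < m)
    (eN : EuclideanSpace ℝ (Fin N) ≃L[ℝ] (Fin N → ℝ)) (heN : eN = EuclideanSpace.equiv (Fin N) ℝ)
    (hspec : ∀ v : EuclideanSpace ℝ (Fin N),
      m * ‖v‖ ^ 2 ≤ inner ℝ (eN.symm (H.mulVec (eN v))) v ∧
        (inner ℝ (eN.symm (H.mulVec (eN v))) v : ℝ) ≤ L * ‖v‖ ^ 2)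
    (β : ℝ) (hβ1 : β < 1)
    (α : ℝ) (hα0 : 0 < α) (hαL : α * L < 2 * (1 + β))
    (M : Matrix (Fin N ⊕ Fin N) (Fin N ⊕ Fin N) ℝ)
    (hM : M = Matrix.fromBlocks ((1 + β) • 1 - α • H) (-(β • 1)) 1 0) :
    ∀ lam ∈ spectrum ℂ (M.map (algebraMap ℝ ℂ)), ‖lam‖ < 1 := by
  subst heN hM
  have hHf : ∀ f : Fin N → ℝ, m * (f ⬝ᵥ f) ≤ f ⬝ᵥ H *ᵥ f ∧ f ⬝ᵥ H *ᵥ f ≤ L * (f ⬝ᵥ f) := by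
    intro f
    have h := hspec (WithLp.toLp 2 f)
    rw [← real_inner_self_eq_norm_sq] at h
    -- inner products of `WithLp.toLp` vectors unfold to dot products
    exact h
  exact fun lam hlam => norm_lt_one_of_mem_spectrum_heavyBallMatrix hsymm hm hHf hβ1 hα0 hαL hlam

theorem stmt_16 {N : ℕ} (H : Matrix (Fin N) (Fin N) ℝ)
    (hsymm : H.IsSymm) (m L : ℝ) (hm : 0 < m) (hmL : m ≤ L)
    (eN : EuclideanSpace ℝ (Fin N) ≃L[ℝ] (Fin N → ℝ)) (heN : eN = EuclideanSpace.equiv (Fin N) ℝ)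
    (hspec : ∀ v : EuclideanSpace ℝ (Fin N),
      m * ‖v‖ ^ 2 ≤ inner ℝ (eN.symm (H.mulVec (eN v))) v ∧
        (inner ℝ (eN.symm (H.mulVec (eN v))) v : ℝ) ≤ L * ‖v‖ ^ 2)
    (β : ℝ) (hβ0 : 0 ≤ β) (hβ1 : β < 1)
    (α : ℝ) (hα0 : 0 < α) (hαL : α * L < 2 * (1 + β))
    (M : Matrix (Fin N ⊕ Fin N) (Fin N ⊕ Fin N) ℝ)
    (hM : M = Matrix.fromBlocks ((1 + β) • 1 - α • H) (-(β • 1)) 1 0) :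
    ∀ lam ∈ spectrum ℂ (M.map (algebraMap ℝ ℂ)), ‖lam‖ < 1 :=
  stmt_16_general H hsymm m L hm eN heN hspec β hβ1 α hα0 hαL M hM
end
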